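/- Let 𝒜 be a structure and x̄ a tuple in 𝒜. Let α₁ > β₁, …, α_n > β_n be ordinals with β₁ ≥ β₂ ≥ ⋯ ≥ β_n. Let ū₁, …, ū_n and v̄₁, …, v̄_n be tuples in 𝒜 with |ū_{i+1}| = |ū_i| + |v̄_i| for each i, with |x̄| ≥ |ū_n| + |v̄_n|, and such that v̄_i is α_i-free over ū_i for each i. Then there is a tuple ȳ in 𝒜 of the same length as x̄ such that for each i = 1, …, n: (1) the initial segment of ȳ of length |ū₁| equals that of x̄; (2) x̄ restricted to its first |ū_i| + |v̄_i| entries is ≤_{β_i} ȳ restricted to its first |ū_i| + |v̄_i| entries; and (3) ȳ restricted to its first |ū_i| + |v̄_i| entries is not automorphic in 𝒜 to the tuple ū_i v̄_i. -/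

import Mathlib

/-!
Common framework: oracle computability via codes, Turing reducibility,
iterated jumps along ordinals, and first-order structures on ℕ with
atomic diagrams.
-/

namespace DCC

open Classical in
/-- Characteristic value of a proposition. -/
noncomputable def cv (p : Prop) : ℕ := if p then 1 else 0

/-- Codes for partial functions computable relative to an oracle
(Kleene-style codes, with an extra code for the oracle). -/
inductive OCode : Type
  | zero | succ | left | right | oracle
  | pair (a b : OCode)
  | comp (a b : OCode)
  | prec (a b : OCode)
  | rfind' (a : OCode)

/-- A Gödel numbering of oracle codes. -/
def OCode.encode : OCode → ℕ
  | .zero => 0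
  | .succ => 1
  | .left => 2
  | .right => 3
  | .oracle => 4
  | .pair a b => (Nat.pair a.encode b.encode) * 4 + 5
  | .comp a b => (Nat.pair a.encode b.encode) * 4 + 6
  | .prec a b => (Nat.pair a.encode b.encode) * 4 + 7
  | .rfind' a => a.encode * 4 + 8

/-- Evaluation of an oracle code relative to an oracle `O : ℕ →. ℕ`. -/
def evalo (O : ℕ →. ℕ) : OCode → ℕ →. ℕ
  | .zero => fun _ => Part.some 0
  | .succ => fun n => Part.some (n + 1)
  | .left => fun n => Part.some n.unpair.1
  | .right => fun n => Part.some n.unpair.2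
  | .oracle => O
  | .pair a b => fun n => Nat.pair <$> evalo O a n <*> evalo O b n
  | .comp a b => fun n => evalo O b n >>= evalo O a
  | .prec a b =>
    Nat.unpaired fun m n =>
      n.rec (evalo O a m) fun y IH => do
        let i ← IH
        evalo O b (Nat.pair m (Nat.pair y i))
  | .rfind' a =>
    Nat.unpaired fun m n =>
      (Nat.rfind fun k => (fun x => x = 0) <$> evalo O a (Nat.pair m (k + n))).map (· + n)

/-- The characteristic (partial) function of a set of naturals. -/
noncomputable def chi (A : Set ℕ) : ℕ →. ℕ := fun n => Part.some (cv (n ∈ A))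

/-- `f` is partial recursive relative to the oracle `O`. -/
def RecursiveIn (O : ℕ →. ℕ) (f : ℕ →. ℕ) : Prop := ∃ c : OCode, evalo O c = f

/-- Turing reducibility for sets of naturals: `TR A B` means `A ≤_T B`. -/
def TR (A B : Set ℕ) : Prop := RecursiveIn (chi B) (chi A)

/-- Turing equivalence of sets of naturals. -/
def TE (A B : Set ℕ) : Prop := TR A B ∧ TR B A

/-- The Turing join `A ⊕ B`. -/
def join (A B : Set ℕ) : Set ℕ :=
  {n | (∃ m ∈ A, n = 2 * m) ∨ (∃ m ∈ B, n = 2 * m + 1)}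

/-- The graph of a function `ℕ → ℕ`, as a set of naturals; used to measure the
Turing degree of a function. -/
def fgraph (f : ℕ → ℕ) : Set ℕ := {n | f n.unpair.1 = n.unpair.2}

/-- A function `ℕ → ℕ` is computable in the set `A`. -/
def FRecIn (f : ℕ → ℕ) (A : Set ℕ) : Prop := RecursiveIn (chi A) (fun n => Part.some (f n))

/-- `X` is computably enumerable relative to the oracle `O`. -/
def CEIn (X O : Set ℕ) : Prop := ∃ c : OCode, X = {n | (evalo (chi O) c n).Dom}

/-- `X` is `Π⁰₁` relative to the oracle `O`. -/
def PiOneIn (X O : Set ℕ) : Prop := CEIn Xᶜ O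

/-- A set is computable if it is Turing reducible to the trivial oracle. -/
def ComputableSet (X : Set ℕ) : Prop := TR X ∅

/-- The Turing jump of a set. -/
def jump (A : Set ℕ) : Set ℕ :=
  {n | ∃ c : OCode, c.encode = n.unpair.1 ∧ (evalo (chi A) c n.unpair.2).Dom}

open Classical in
/-- The `α`-th iterated Turing jump `A^(α)` of `A`, defined by transfinite recursion;
at countable limit stages we take the join along an enumeration of the earlier levels. -/
noncomputable def jumpIter (A : Set ℕ) (α : Ordinal.{0}) : Set ℕ :=
  Ordinal.limitRecOn α A (fun _ ih => jump ih)
    (fun o _ ih =>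
      if h : ∃ f : ℕ → {β // β < o}, Function.Surjective f then
        {n | n.unpair.2 ∈ ih (h.choose n.unpair.1).1 (h.choose n.unpair.1).2}
      else ∅)

/-- The level of the jump hierarchy corresponding to `Δ⁰_α` (Ash–Knight convention:
`Δ⁰_n`-complete is `0^(n-1)` for finite `n ≥ 1`, while `Δ⁰_α`-complete is `0^(α)`
for infinite `α`). -/
noncomputable def hLevel (α : Ordinal.{0}) : Ordinal.{0} :=
  if α < Ordinal.omega0 then α - 1 else α

/-- A `Δ⁰_α(C)`-complete set. -/
noncomputable def deltaComplete (C : Set ℕ) (α : Ordinal.{0}) : Set ℕ :=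
  jumpIter C (hLevel α)

/-- `X` is `Δ⁰_α` relative to `C`. -/
def DeltaIn (X : Set ℕ) (α : Ordinal.{0}) (C : Set ℕ) : Prop :=
  TR X (deltaComplete C α)

/-- `X` is `Σ⁰_α` relative to `C`, i.e. c.e. in a `Δ⁰_α(C)`-complete set. -/
def SigmaIn (X : Set ℕ) (α : Ordinal.{0}) (C : Set ℕ) : Prop :=
  CEIn X (deltaComplete C α)

/-- An ordinal is computable if it is at most the order type of a computable
well-order on ℕ. -/
def IsComputableOrdinal (α : Ordinal.{0}) : Prop :=
  ∃ r : ℕ → ℕ → Prop, (∃ h : IsWellOrder ℕ r, α ≤ @Ordinal.type ℕ r h) ∧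
    ComputableSet {n | r n.unpair.1 n.unpair.2}

/-- An ordinal is countable. -/
def IsCountableOrdinal (α : Ordinal.{0}) : Prop := α.card ≤ Cardinal.aleph0

open FirstOrder FirstOrder.Language

variable (L : FirstOrder.Language.{0, 0})

/-- A Gödel number for a (bounded) formula over an encodable language. -/
def gnum [∀ i, Encodable (L.Functions i)] [∀ i, Encodable (L.Relations i)]
    {α : Type} [Encodable α] {n : ℕ} (φ : L.BoundedFormula α n) : ℕ :=
  Encodable.encode φ.listEncode

/-- The atomic diagram of a structure on ℕ: the set of Gödel numbers of atomic and
negated atomic sentences with parameters from ℕ which are true in the structure. -/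
def atomicDiagram [∀ i, Encodable (L.Functions i)] [∀ i, Encodable (L.Relations i)]
    (SA : L.Structure ℕ) : Set ℕ :=
  { n | ∃ φ : L.Formula ℕ,
      (φ.IsAtomic ∨ ∃ ψ : L.Formula ℕ, ψ.IsAtomic ∧ φ = ψ.not) ∧
      n = gnum L φ ∧ @Formula.Realize L ℕ SA ℕ φ id }

/-- Isomorphisms between two structures on ℕ. -/
def SIso (SA SB : L.Structure ℕ) : Type := @FirstOrder.Language.Equiv L ℕ ℕ SA SB

/-- The underlying function `ℕ → ℕ` of an isomorphism. -/
def SIso.fn {SA SB : L.Structure ℕ} (g : SIso L SA SB) : ℕ → ℕ :=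
  (@FirstOrder.Language.Equiv.toEquiv L ℕ ℕ SA SB g : ℕ → ℕ)

/-- `SB` is a copy of (i.e. is isomorphic to) `SA`. -/
def Copies (SA SB : L.Structure ℕ) : Prop := Nonempty (SIso L SA SB)

section Enc

variable [∀ i, Encodable (L.Functions i)] [∀ i, Encodable (L.Relations i)]

/-- The structure `SB` is computable in the degree (represented by) `C`. -/
def CComputable (SB : L.Structure ℕ) (C : Set ℕ) : Prop :=
  TR (atomicDiagram L SB) C

/-- `D` computes an isomorphism between `SB` and `SC`. -/
def ComputesIso (D : Set ℕ) (SB SC : L.Structure ℕ) : Prop :=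
  ∃ g : SIso L SB SC, FRecIn (SIso.fn L g) D

/-- `D` computes an isomorphism between any two `C`-computable copies of `SA`. -/
def ComputesIsosOver (SA : L.Structure ℕ) (C D : Set ℕ) : Prop :=
  ∀ SB SC : L.Structure ℕ, Copies L SA SB → Copies L SA SC →
    CComputable L SB C → CComputable L SC C → ComputesIso L D SB SC

/-- `D` is the degree of categoricity of `SA` relative to `C`. -/
def IsDegreeOfCategoricity (SA : L.Structure ℕ) (C D : Set ℕ) : Prop :=
  TR C D ∧ ComputesIsosOver L SA C D ∧
    ∀ D' : Set ℕ, TR C D' → ComputesIsosOver L SA C D' → TR D D'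

/-- `D` is a strong degree of categoricity of `SA` relative to `C`. -/
def IsStrongDegreeOfCategoricity (SA : L.Structure ℕ) (C D : Set ℕ) : Prop :=
  IsDegreeOfCategoricity L SA C D ∧
    ∃ SB SC : L.Structure ℕ, Copies L SA SB ∧ Copies L SA SC ∧
      CComputable L SB C ∧ CComputable L SC C ∧
      ∀ g : SIso L SB SC, TR D (join (fgraph (SIso.fn L g)) C)

/-- `SA` is `Δ⁰_α` categorical on the cone above `D`. -/
def DeltaCatAbove (SA : L.Structure ℕ) (α : Ordinal.{0}) (D : Set ℕ) : Prop :=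
  ∀ C : Set ℕ, TR D C →
    ∀ SB SC : L.Structure ℕ, Copies L SA SB → Copies L SA SC →
      CComputable L SB C → CComputable L SC C →
        ∃ g : SIso L SB SC, DeltaIn (fgraph (SIso.fn L g)) α C

/-- `SA` is computably categorical on the cone above `D`. -/
def CompCatAbove (SA : L.Structure ℕ) (D : Set ℕ) : Prop :=
  ∀ C : Set ℕ, TR D C →
    ∀ SB SC : L.Structure ℕ, Copies L SA SB → Copies L SA SC →
      CComputable L SB C → CComputable L SC C →
        ∃ g : SIso L SB SC, FRecIn (SIso.fn L g) C

end Enc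

/-- The standard back-and-forth relations `≤_α` on tuples from a structure on ℕ. -/
noncomputable def bf [∀ i, Encodable (L.Functions i)] [∀ i, Encodable (L.Relations i)]
    (SA : L.Structure ℕ) : Ordinal.{0} → List ℕ → List ℕ → Prop :=
  WellFounded.fix Ordinal.lt_wf (fun o ih a b =>
    a.length = b.length ∧
      if o = 0 then
        ∀ φ : L.Formula (Fin a.length), φ.IsQF → gnum L φ < a.length →
          @FirstOrder.Language.Formula.Realize L ℕ SA (Fin a.length) φ (fun i => a.getD (i : ℕ) 0) →
          @FirstOrder.Language.Formula.Realize L ℕ SA (Fin a.length) φ (fun i => b.getD (i : ℕ) 0)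
      else
        ∀ β (hβ : β < o), ∀ d : List ℕ, ∃ c : List ℕ, c.length = d.length ∧
          ih β hβ (b ++ d) (a ++ c))

/-- The tuple `abar` is `α`-free over `cbar` in the structure `SA`. -/
noncomputable def AlphaFree [∀ i, Encodable (L.Functions i)] [∀ i, Encodable (L.Relations i)]
    (SA : L.Structure ℕ) (α : Ordinal.{0}) (abar cbar : List ℕ) : Prop :=
  ∀ a1 : List ℕ, ∀ β < α, ∃ a' a1' : List ℕ,
    a'.length = abar.length ∧ a1'.length = a1.length ∧
    bf L SA β (cbar ++ abar ++ a1) (cbar ++ a' ++ a1') ∧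
    ¬ bf L SA α (cbar ++ a') (cbar ++ abar)

/-!
The requirements are met one at a time, in the order `i = 1, …, n`, keeping `x̄ ≤_{βⱼ} ȳ` for
those not yet treated. If `ȳ ↾ (|ūᵢ|+|v̄ᵢ|)` is carried to `ūᵢv̄ᵢ` by an automorphism `g`, then
`g(ȳ) = ūᵢv̄ᵢā₁`, and the `αᵢ`-freeness of `v̄ᵢ` over `ūᵢ` yields `ūᵢā′ā₁′ ≥_{βᵢ} g(ȳ)` with
`ūᵢā′ ≰_{αᵢ} ūᵢv̄ᵢ`; replace `ȳ` by `g⁻¹(ūᵢā′ā₁′)`. Since automorphic tuples are `≤_α`-related for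
every `α`, the new `ȳ ↾ (|ūᵢ|+|v̄ᵢ|)` is not automorphic to `ūᵢv̄ᵢ`, and the new `ȳ` is
`≥_{βᵢ}` the old one. It agrees with the old one on the first `|ūᵢ| ≥ |ūⱼ|+|v̄ⱼ|` (`j < i`) entries,
so earlier requirements survive, and `βⱼ ≤ βᵢ` for `j > i` keeps the invariant; finally `≤_β`
passes to initial segments.
-/

section GodelNumbers

open Encodable

variable {L} [∀ i, Encodable (L.Functions i)]

theorem encode_list_eq_of_map_encode_eq {A B : Type*} [Encodable A] [Encodable B] :
    ∀ {l₁ : List A} {l₂ : List B}, l₁.map encode = l₂.map encode → encode l₁ = encode l₂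
  | [], [], _ => rfl
  | a :: l₁, b :: l₂, h => by
    simp only [List.map_cons, List.cons.injEq] at h
    rw [encode_list_cons, encode_list_cons, h.1, encode_list_eq_of_map_encode_eq h.2]

theorem encode_relabel_term {γ δ : Type} [Encodable γ] [Encodable δ] {g : γ → δ}
    (hg : ∀ x, encode (g x) = encode x) (t : L.Term γ) :
    encode (t.relabel g) = encode t := by
  refine encode_list_eq_of_map_encode_eq ?_
  induction t with
  | var a => simp [Term.relabel, Term.listEncode, encode_inl, hg]
  | func f ts ih =>
    simp only [Term.relabel, Term.listEncode, List.map_cons, List.map_flatMap]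
    exact congrArg _ (List.flatMap_congr fun i _ => ih i)

variable [∀ i, Encodable (L.Relations i)]

theorem encode_relabelAux {m M k : ℕ} {f : Fin m → Fin M} (hf : ∀ i, (f i : ℕ) = i)
    (x : Fin m ⊕ Fin k) :
    encode (BoundedFormula.relabelAux (n := 0) (Sum.inl ∘ f) k x) = encode x := by
  cases x with
  | inl a =>
    simp only [BoundedFormula.relabelAux, Function.comp_apply, Sum.map_inl,
      Equiv.sumAssoc_apply_inl_inl, id_eq, encode_inl]
    exact congrArg _ (hf a)
  | inr i =>
    simp only [BoundedFormula.relabelAux, Function.comp_apply, Sum.map_inr, id_eq,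
      Equiv.sumAssoc_apply_inr, encode_inr, finSumFinEquiv_apply_right]
    exact congrArg (2 * · + 1) (Nat.zero_add i)

theorem map_encode_listEncode_relabel {m M : ℕ} {f : Fin m → Fin M} (hf : ∀ i, (f i : ℕ) = i)
    {k : ℕ} {φ : L.BoundedFormula (Fin m) k} (hφ : φ.IsQF) :
    (φ.relabel (n := 0) (Sum.inl ∘ f)).listEncode.map encode = φ.listEncode.map encode := by
  have hterm := encode_relabel_term (L := L) (encode_relabelAux (k := k) hf)
  induction hφ with
  | falsum => simp [BoundedFormula.listEncode, encode_inr]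
  | of_isAtomic h =>
    cases h with
    | equal t₁ t₂ =>
      change (BoundedFormula.equal (t₁.relabel _) (t₂.relabel _)).listEncode.map encode = _
      simp [Term.bdEqual, BoundedFormula.listEncode, encode_inl, encode_sigma_val, hterm]
    | rel R ts =>
      change (BoundedFormula.rel R fun i => (ts i).relabel _).listEncode.map encode = _
      simp [Relations.boundedFormula, BoundedFormula.listEncode, encode_inl, encode_sigma_val,
        hterm]
  | imp _ _ ih₁ ih₂ =>
    simp [BoundedFormula.listEncode, ih₁, ih₂, encode_inr]

theorem gnum_relabel {m M : ℕ} {f : Fin m → Fin M} (hf : ∀ i, (f i : ℕ) = i)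
    {φ : L.Formula (Fin m)} (hφ : φ.IsQF) : gnum L (φ.relabel f) = gnum L φ :=
  encode_list_eq_of_map_encode_eq (map_encode_listEncode_relabel hf hφ)

theorem gnum_injective {α : Type} [Encodable α] {n : ℕ} :
    Function.Injective (gnum L : L.BoundedFormula α n → ℕ) := by
  intro φ ψ h
  have key := BoundedFormula.listDecode_encode_list (L := L) [⟨n, φ⟩]
  rw [List.flatMap_singleton, encode_injective h, ← List.flatMap_singleton (f := fun φ :
    Σ n, L.BoundedFormula α n => φ.2.listEncode) ⟨n, ψ⟩,
    BoundedFormula.listDecode_encode_list] at key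
  simpa using key.symm

theorem exists_gnum_bound {N : ℕ} (F : L.Formula (Fin N) → ℕ) :
    ∃ p, ∀ φ : L.Formula (Fin N), gnum L φ < N → F φ < p := by
  have hfin : {φ : L.Formula (Fin N) | gnum L φ < N}.Finite :=
    (Set.finite_Iio N).preimage gnum_injective.injOn
  obtain ⟨p, hp⟩ := (hfin.image F).bddAbove
  exact ⟨p + 1, fun φ hφ => Nat.lt_succ_of_le (hp ⟨φ, hφ, rfl⟩)⟩

end GodelNumbers

section BackAndForth

variable {L} [∀ i, Encodable (L.Functions i)] [∀ i, Encodable (L.Relations i)]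
  {SA : L.Structure ℕ}

variable (SA) in
/-- At level `0` only formulas with Gödel number below the length of the tuples are transferred,
so tuples are padded to make room for relabelled formulas. -/
def QFTransfer (N : ℕ) (a b : List ℕ) : Prop :=
  ∀ φ : L.Formula (Fin N), φ.IsQF → gnum L φ < N →
    @Formula.Realize L ℕ SA (Fin N) φ (fun i => a.getD i 0) →
    @Formula.Realize L ℕ SA (Fin N) φ (fun i => b.getD i 0)

theorem bf_iff {o : Ordinal.{0}} {a b : List ℕ} :
    bf L SA o a b ↔ a.length = b.length ∧
      if o = 0 then QFTransfer SA a.length a b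
      else ∀ β < o, ∀ d : List ℕ, ∃ c : List ℕ, c.length = d.length ∧
        bf L SA β (b ++ d) (a ++ c) := by
  unfold bf
  rw [WellFounded.fix_eq]
  rfl

theorem bf.length_eq {o : Ordinal.{0}} {a b : List ℕ} (h : bf L SA o a b) :
    a.length = b.length :=
  (bf_iff.1 h).1

theorem bf_zero_iff {a b : List ℕ} :
    bf L SA 0 a b ↔ a.length = b.length ∧ QFTransfer SA a.length a b := by
  rw [bf_iff, if_pos rfl]

theorem bf_iff_of_ne_zero {o : Ordinal.{0}} (ho : o ≠ 0) {a b : List ℕ} :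
    bf L SA o a b ↔ a.length = b.length ∧ ∀ β < o, ∀ d : List ℕ, ∃ c : List ℕ,
      c.length = d.length ∧ bf L SA β (b ++ d) (a ++ c) := by
  rw [bf_iff, if_neg ho]

theorem bf_refl (o : Ordinal.{0}) (a : List ℕ) : bf L SA o a a := by
  induction o using WellFoundedLT.induction generalizing a with
  | _ o ih =>
    refine bf_iff.2 ⟨rfl, ?_⟩
    split
    · exact fun _ _ _ h => h
    · exact fun β hβ d => ⟨d, rfl, ih β hβ _⟩

theorem bf_trans {o : Ordinal.{0}} {a b c : List ℕ} (hab : bf L SA o a b)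
    (hbc : bf L SA o b c) : bf L SA o a c := by
  induction o using WellFoundedLT.induction generalizing a b c with
  | _ o ih =>
    obtain ⟨hlab, hab⟩ := bf_iff.1 hab
    obtain ⟨hlbc, hbc⟩ := bf_iff.1 hbc
    refine bf_iff.2 ⟨hlab.trans hlbc, ?_⟩
    split_ifs at hab hbc ⊢
    · rw [← hlab] at hbc
      exact fun φ hφ hg hr => hbc φ hφ hg (hab φ hφ hg hr)
    · intro β hβ d
      obtain ⟨c₁, hc₁, h₁⟩ := hbc β hβ d
      obtain ⟨c₂, hc₂, h₂⟩ := hab β hβ c₁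
      exact ⟨c₂, hc₂.trans hc₁, ih β hβ h₁ h₂⟩

theorem QFTransfer.realize_of_append {N m : ℕ} {a b t t' : List ℕ}
    (h : QFTransfer SA N (a ++ t) (b ++ t')) (ha : m ≤ a.length) (hb : m ≤ b.length)
    (hN : m ≤ N) {φ : L.Formula (Fin m)} (hφ : φ.IsQF) (hg : gnum L φ < N)
    (hr : @Formula.Realize L ℕ SA _ φ (fun i => a.getD i 0)) :
    @Formula.Realize L ℕ SA _ φ (fun i => b.getD i 0) := by
  have key := h (φ.relabel (Fin.castLE hN)) (hφ.relabel _)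
    (by rwa [gnum_relabel (f := Fin.castLE hN) (fun _ => rfl) hφ])
  simp only [Formula.realize_relabel] at key
  convert key ?_ using 2 with i
  · exact (List.getD_append _ _ _ _ (i.isLt.trans_le hb)).symm
  · convert hr using 2 with i
    exact List.getD_append _ _ _ _ (i.isLt.trans_le ha)

theorem QFTransfer.of_append {a b t t' : List ℕ}
    (h : QFTransfer SA (a.length + t.length) (a ++ t) (b ++ t')) (hab : a.length = b.length) :
    QFTransfer SA a.length a b :=
  fun _ hφ hg => h.realize_of_append le_rfl hab.le le_self_add hφ (hg.trans_le le_self_add)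

theorem bf_zero_of_ne_zero {o : Ordinal.{0}} (ho : o ≠ 0) {a b : List ℕ}
    (h : bf L SA o a b) : bf L SA 0 a b := by
  obtain ⟨hlen, h⟩ := (bf_iff_of_ne_zero ho).1 h
  refine bf_zero_iff.2 ⟨hlen, fun φ hφ hg hr => ?_⟩
  by_contra hcon
  obtain ⟨c, hc, h0⟩ := h 0 (pos_iff_ne_zero.2 ho) (List.replicate (gnum L φ.not + 1) 0)
  obtain ⟨-, h0⟩ := bf_zero_iff.1 h0
  refine h0.realize_of_append hlen.le le_rfl (by simp [hlen]) hφ.not ?_ hcon hr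
  rw [List.length_append, List.length_replicate]
  exact (Nat.lt_succ_self _).trans_le (Nat.le_add_left _ _)

theorem bf_of_le {γ o : Ordinal.{0}} (hγo : γ ≤ o) {a b : List ℕ} (h : bf L SA o a b) :
    bf L SA γ a b := by
  rcases hγo.eq_or_lt with rfl | hlt
  · exact h
  have ho : o ≠ 0 := hlt.ne_bot
  rcases eq_or_ne γ 0 with rfl | hγ
  · exact bf_zero_of_ne_zero ho h
  obtain ⟨hlen, h⟩ := (bf_iff_of_ne_zero ho).1 h
  exact (bf_iff_of_ne_zero hγ).2 ⟨hlen, fun β hβ => h β (hβ.trans hlt)⟩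

end BackAndForth

section Restriction

variable {L} [∀ i, Encodable (L.Functions i)] [∀ i, Encodable (L.Relations i)]
  {SA : L.Structure ℕ}

theorem getD_append_skip (s t r : List ℕ) (i : ℕ) :
    (s ++ (t ++ r)).getD (if i < s.length then i else i + t.length) 0 = (s ++ r).getD i 0 := by
  split_ifs with hi
  · rw [List.getD_append _ _ _ _ hi, List.getD_append _ _ _ _ hi]
  · rw [List.getD_append_right _ _ _ _ (by omega), List.getD_append_right _ _ _ _ (by omega),
      List.getD_append_right _ _ _ _ (by omega)]
    congr 1
    omega

theorem exists_bf_zero_delete_middle {s s' t t' w w' : List ℕ} (hs : s.length = s'.length)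
    (ht : t.length = t'.length)
    (h : ∀ d, ∃ c : List ℕ, c.length = d.length ∧
      bf L SA 0 (s ++ t ++ w ++ d) (s' ++ t' ++ w' ++ c))
    (d : List ℕ) :
    ∃ c : List ℕ, c.length = d.length ∧ bf L SA 0 (s ++ w ++ d) (s' ++ w' ++ c) := by
  set m := (s ++ w ++ d).length
  set M := (s ++ t ++ w ++ d).length
  have hskip (i : Fin m) : (if (i : ℕ) < s.length then (i : ℕ) else i + t.length) < M := by
    have := i.isLt
    split_ifs <;> simp only [m, M, List.length_append] at this ⊢ <;> omega
  let ι : Fin m → Fin M := fun i => ⟨_, hskip i⟩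
  -- relabelling along `ι` may raise Gödel numbers; padding `d` by `p` entries makes room for them
  obtain ⟨p, hp⟩ := exists_gnum_bound fun φ : L.Formula (Fin m) => gnum L (φ.relabel ι)
  obtain ⟨c, hc, hbf⟩ := h (d ++ List.replicate p 0)
  obtain ⟨hlen, hq⟩ := bf_zero_iff.1 hbf
  simp only [List.length_append, List.length_replicate] at hlen hc
  refine ⟨c.take d.length, by simp [hc], bf_zero_iff.2 ⟨by simp; omega, fun φ hφ hg hr => ?_⟩⟩
  rw [← List.take_append_drop d.length c, ← List.append_assoc, ← List.append_assoc] at hq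
  have key := hq.realize_of_append (m := M) (φ := φ.relabel ι) le_rfl
    (by simp only [M, List.length_append, List.length_take]; omega)
    (by simp only [M, List.length_append]; omega) (hφ.relabel _)
    ((hp φ hg).trans_le (by simp only [List.length_append, List.length_replicate]; omega)) (by
      rw [Formula.realize_relabel]
      convert hr using 2 with i
      simpa only [List.append_assoc, Function.comp_apply, ι] using getD_append_skip s t (w ++ d) i)
  rw [Formula.realize_relabel] at key
  convert key using 2 with i
  simpa only [List.append_assoc, Function.comp_apply, ι, hs, ht] using
    (getD_append_skip s' t' (w' ++ c.take d.length) i).symm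

theorem bf_delete_middle {o : Ordinal.{0}} (ho : o ≠ 0) {s s' t t' w w' : List ℕ}
    (hs : s.length = s'.length) (ht : t.length = t'.length)
    (h : bf L SA o (s ++ t ++ w) (s' ++ t' ++ w')) : bf L SA o (s ++ w) (s' ++ w') := by
  induction o using WellFoundedLT.induction generalizing s s' t t' w w' with
  | _ o ih =>
    obtain ⟨hlen, h⟩ := (bf_iff_of_ne_zero ho).1 h
    simp only [List.length_append] at hlen
    refine (bf_iff_of_ne_zero ho).2 ⟨by simp; omega, fun β hβ d => ?_⟩
    rcases eq_or_ne β 0 with rfl | hβ0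
    · exact exists_bf_zero_delete_middle hs.symm ht.symm (h 0 hβ) d
    obtain ⟨c, hc, hbf⟩ := h β hβ d
    refine ⟨c, hc, ?_⟩
    simp only [List.append_assoc] at hbf ⊢
    exact ih β hβ hβ0 hs.symm ht.symm (by simpa only [List.append_assoc] using hbf)

theorem bf_take {o : Ordinal.{0}} {a b : List ℕ} (k : ℕ) (h : bf L SA o a b) :
    bf L SA o (a.take k) (b.take k) := by
  have hlen := h.length_eq
  rcases eq_or_ne o 0 with rfl | ho
  · obtain ⟨-, hq⟩ := bf_zero_iff.1 h
    refine bf_zero_iff.2 ⟨by simp [hlen], ?_⟩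
    rw [← List.take_append_drop k a, ← List.take_append_drop k b, List.length_append] at hq
    exact hq.of_append (by simp [hlen])
  · simpa using bf_delete_middle ho (t := a.drop k) (t' := b.drop k) (w := []) (w' := [])
      (by simp [hlen]) (by simp [hlen]) (by simpa using h)

end Restriction

section Automorphisms

variable {L}

def SIso.symm {SA SB : L.Structure ℕ} (g : SIso L SA SB) : SIso L SB SA :=
  @FirstOrder.Language.Equiv.symm L ℕ ℕ SA SB g

theorem SIso.fn_symm_fn {SA SB : L.Structure ℕ} (g : SIso L SA SB) (x : ℕ) :
    SIso.fn L g.symm (SIso.fn L g x) = x :=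
  Equiv.symm_apply_apply (@FirstOrder.Language.Equiv.toEquiv L ℕ ℕ SA SB g) x

theorem SIso.map_symm_map {SA SB : L.Structure ℕ} (g : SIso L SA SB) (l : List ℕ) :
    (l.map (SIso.fn L g)).map (SIso.fn L g.symm) = l := by
  simp [Function.comp_def, g.fn_symm_fn]

variable (SA : L.Structure ℕ) in
def Automorphic (w w' : List ℕ) : Prop := ∃ g : SIso L SA SA, w.map (SIso.fn L g) = w'

variable [∀ i, Encodable (L.Functions i)] [∀ i, Encodable (L.Relations i)] {SA : L.Structure ℕ}

theorem bf_map (o : Ordinal.{0}) (g : SIso L SA SA) (w : List ℕ) :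
    bf L SA o w (w.map (SIso.fn L g)) := by
  induction o using WellFoundedLT.induction generalizing g w with
  | _ o ih =>
    refine bf_iff.2 ⟨(List.length_map _).symm, ?_⟩
    split_ifs
    · intro φ _ _ hr
      let _ := SA
      let g' : ℕ ≃[L] ℕ := g
      have hw (i : Fin w.length) : (w.map (SIso.fn L g)).getD i 0 = g' (w.getD i 0) := by
        simp; rfl
      simp only [hw]
      exact (StrongHomClass.realize_formula g' φ).2 hr
    · intro β hβ d
      refine ⟨d.map (SIso.fn L g.symm), List.length_map _, ?_⟩
      have key := ih β hβ g.symm (w.map (SIso.fn L g) ++ d)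
      rwa [List.map_append, SIso.map_symm_map] at key

theorem Automorphic.bf {w w' : List ℕ} (h : Automorphic SA w w') (o : Ordinal.{0}) :
    bf L SA o w w' := by
  obtain ⟨g, rfl⟩ := h
  exact bf_map o g w

theorem exists_bf_not_automorphic {α β : Ordinal.{0}} (hβ : β < α) {u v : List ℕ}
    (hfree : AlphaFree L SA α v u) (y : List ℕ) :
    ∃ y' : List ℕ, y'.take u.length = y.take u.length ∧ bf L SA β y y' ∧
      ¬ Automorphic SA (y'.take (u.length + v.length)) (u ++ v) := by
  by_cases hy : Automorphic SA (y.take (u.length + v.length)) (u ++ v)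
  swap
  · exact ⟨y, rfl, bf_refl β y, hy⟩
  obtain ⟨g, hg⟩ := hy
  set r := (y.drop (u.length + v.length)).map (SIso.fn L g)
  obtain ⟨a', a₁', ha', -, hbf, hnot⟩ := hfree r β hβ
  have hgy : y.map (SIso.fn L g) = u ++ v ++ r := by
    rw [← hg, ← List.map_append, List.take_append_drop]
  have hy : y = (u ++ v ++ r).map (SIso.fn L g.symm) := by
    rw [← hgy, SIso.map_symm_map]
  have htake : ((u ++ a' ++ a₁').map (SIso.fn L g.symm)).take (u.length + v.length)
      = (u ++ a').map (SIso.fn L g.symm) := by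
    rw [← List.map_take, List.take_left' (by simp [ha'])]
  refine ⟨(u ++ a' ++ a₁').map (SIso.fn L g.symm), ?_, ?_, ?_⟩
  · rw [hy, ← List.map_take, ← List.map_take]
    simp
  · exact bf_trans (hgy ▸ bf_map β g y) (bf_trans hbf (bf_map β g.symm _))
  · rw [htake]
    exact fun hτ => hnot (bf_trans (bf_map α g.symm _) (hτ.bf α))

end Automorphisms

section Chain

variable {n : ℕ} {u v : Fin n → List ℕ}

theorem length_add_le_of_lt
    (hlen : ∀ (i : Fin n) (h : (i : ℕ) + 1 < n),
      (u ⟨(i : ℕ) + 1, h⟩).length = (u i).length + (v i).length)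
    {j i : Fin n} (hji : j < i) : (u j).length + (v j).length ≤ (u i).length := by
  obtain ⟨i, hi⟩ := i
  rw [Fin.lt_def] at hji
  induction i with
  | zero => exact absurd hji (Nat.not_lt_zero _)
  | succ i ih =>
    rw [hlen ⟨i, by omega⟩ hi]
    rcases Nat.lt_succ_iff_lt_or_eq.1 hji with hji | hji
    · exact (ih (by omega) hji).trans le_self_add
    · subst hji
      exact le_rfl

theorem length_le_length_of_le
    (hlen : ∀ (i : Fin n) (h : (i : ℕ) + 1 < n),
      (u ⟨(i : ℕ) + 1, h⟩).length = (u i).length + (v i).length)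
    {j i : Fin n} (hji : j ≤ i) : (u j).length ≤ (u i).length := by
  rcases hji.eq_or_lt with rfl | hji
  · rfl
  · exact le_self_add.trans (length_add_le_of_lt hlen hji)

end Chain

section Construction

variable {L} [∀ i, Encodable (L.Functions i)] [∀ i, Encodable (L.Relations i)]
  {SA : L.Structure ℕ}

theorem exists_meeting_first_requirements {n : ℕ} (x : List ℕ) {a b : Fin n → Ordinal.{0}}
    {u v : Fin n → List ℕ} (hab : ∀ i : Fin n, b i < a i)
    (hmono : ∀ i j : Fin n, i ≤ j → b j ≤ b i)
    (hlen : ∀ (i : Fin n) (h : (i : ℕ) + 1 < n),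
      (u ⟨(i : ℕ) + 1, h⟩).length = (u i).length + (v i).length)
    (hfree : ∀ i : Fin n, AlphaFree L SA (a i) (v i) (u i)) {m : ℕ} (hm : m ≤ n) :
    ∃ y : List ℕ, y.length = x.length ∧
      (∀ h : 0 < n, y.take (u ⟨0, h⟩).length = x.take (u ⟨0, h⟩).length) ∧
      (∀ j : Fin n, (j : ℕ) < m →
        bf L SA (b j) (x.take ((u j).length + (v j).length))
          (y.take ((u j).length + (v j).length)) ∧
        ¬ Automorphic SA (y.take ((u j).length + (v j).length)) (u j ++ v j)) ∧
      (∀ j : Fin n, m ≤ j → bf L SA (b j) x y) := by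
  induction m with
  | zero => exact ⟨x, rfl, fun _ => rfl, fun _ h => absurd h (Nat.not_lt_zero _),
      fun _ _ => bf_refl _ x⟩
  | succ m ih =>
    obtain ⟨y, hy_len, hy_pre, hy_done, hy_rest⟩ := ih (by omega)
    let i : Fin n := ⟨m, hm⟩
    obtain ⟨y', hy'_pre, hyy', hy'_not⟩ := exists_bf_not_automorphic (hab i) (hfree i) y
    have hagree {l : ℕ} (hl : l ≤ (u i).length) : y'.take l = y.take l := by
      rw [← min_eq_left hl, ← List.take_take, hy'_pre, List.take_take]
    refine ⟨y', hyy'.length_eq.symm.trans hy_len, fun h => ?_, fun j hj => ?_, fun j hj => ?_⟩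
    · rw [hagree (length_le_length_of_le hlen (Fin.le_def.2 (Nat.zero_le _)))]
      exact hy_pre h
    · rcases Nat.lt_succ_iff_lt_or_eq.1 hj with hj | hj
      · rw [hagree (length_add_le_of_lt hlen (show j < i from hj))]
        exact hy_done j hj
      · rw [show j = i from Fin.ext hj]
        exact ⟨bf_take _ (bf_trans (hy_rest i le_rfl) hyy'), hy'_not⟩
    · exact bf_trans (hy_rest j (by omega))
        (bf_of_le (hmono i j (Fin.le_def.2 (by simp [i]; omega))) hyy')

end Construction

theorem partial_isos_different_general
    (L : FirstOrder.Language.{0, 0}) [∀ i, Encodable (L.Functions i)]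
    [∀ i, Encodable (L.Relations i)] (SA : L.Structure ℕ)
    (n : ℕ) (x : List ℕ) (a b : Fin n → Ordinal.{0}) (u v : Fin n → List ℕ)
    (hab : ∀ i : Fin n, b i < a i)
    (hmono : ∀ i j : Fin n, i ≤ j → b j ≤ b i)
    (hlen : ∀ (i : Fin n) (h : (i : ℕ) + 1 < n),
      (u ⟨(i : ℕ) + 1, h⟩).length = (u i).length + (v i).length)
    (hfree : ∀ i : Fin n, AlphaFree L SA (a i) (v i) (u i)) :
    ∃ y : List ℕ, y.length = x.length ∧
      (∀ h : 0 < n, y.take (u ⟨0, h⟩).length = x.take (u ⟨0, h⟩).length) ∧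
      (∀ i : Fin n, bf L SA (b i) (x.take ((u i).length + (v i).length))
        (y.take ((u i).length + (v i).length))) ∧
      (∀ i : Fin n, ¬ ∃ g : SIso L SA SA,
        (y.take ((u i).length + (v i).length)).map (SIso.fn L g) = u i ++ v i) := by
  obtain ⟨y, hy_len, hy_pre, hy_done, -⟩ :=
    exists_meeting_first_requirements x hab hmono hlen hfree le_rfl
  exact ⟨y, hy_len, hy_pre, fun i => (hy_done i i.isLt).1, fun i => (hy_done i i.isLt).2⟩

/-- (Lemma on making partial isomorphisms different.) Given
`α_i > β_i` with `β₁ ≥ ⋯ ≥ β_n`, tuples `ū_i, v̄_i` with `|ū_{i+1}| = |ū_i| + |v̄_i|`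
and `v̄_i` `α_i`-free over `ū_i`, and any sufficiently long tuple `x̄`, there is a
tuple `ȳ` agreeing with `x̄` on the first `|ū₁|` entries, with
`x̄ ↾ (|ū_i|+|v̄_i|) ≤_{β_i} ȳ ↾ (|ū_i|+|v̄_i|)`, and with `ȳ ↾ (|ū_i|+|v̄_i|)` not
automorphic to `ū_i v̄_i`, for each `i`. -/
theorem partial_isos_different
    (L : FirstOrder.Language.{0, 0}) [∀ i, Encodable (L.Functions i)]
    [∀ i, Encodable (L.Relations i)] (SA : L.Structure ℕ)
    (n : ℕ) (x : List ℕ) (a b : Fin n → Ordinal.{0}) (u v : Fin n → List ℕ)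
    (hab : ∀ i : Fin n, b i < a i)
    (hmono : ∀ i j : Fin n, i ≤ j → b j ≤ b i)
    (hlen : ∀ (i : Fin n) (h : (i : ℕ) + 1 < n),
      (u ⟨(i : ℕ) + 1, h⟩).length = (u i).length + (v i).length)
    (hx : ∀ i : Fin n, (u i).length + (v i).length ≤ x.length)
    (hfree : ∀ i : Fin n, AlphaFree L SA (a i) (v i) (u i)) :
    ∃ y : List ℕ, y.length = x.length ∧
      (∀ h : 0 < n, y.take (u ⟨0, h⟩).length = x.take (u ⟨0, h⟩).length) ∧
      (∀ i : Fin n, bf L SA (b i) (x.take ((u i).length + (v i).length))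
        (y.take ((u i).length + (v i).length))) ∧
      (∀ i : Fin n, ¬ ∃ g : SIso L SA SA,
        (y.take ((u i).length + (v i).length)).map (SIso.fn L g) = u i ++ v i) :=
  partial_isos_different_general L SA n x a b u v hab hmono hlen hfree

end DCC
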